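/- arXiv:2404.04110 — 4 statements merged into one kernel-verified Lean document; each statement's English description precedes it below -/
import Mathlib

section
/- Let γ ≠ 0, g, σ, ε₀ > 0, and let T_k = tanh(k)/k. For positive integers k ≠ l, define E_{k,l} := [σγ²(l² − k²)T_kT_l(T_k − T_l) − ((g + σk²)T_k − (g + σl²)T_l)²] / ((T_k − T_l)²γ²ε₀). If λ*_{k,+}(E₀) = λ*_{l,+}(E₀) (where λ*_{k,+} = (γ/2)T_k + √(γ²T_k²/4 + (g+σk²)T_k − ε₀E₀²), assuming the discriminants are nonnegative), then E₀² = E_{k,l}. -/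
/-!
Writing the resonance as `√A = γ (T_l - T_k) / 2 + √B` and squaring twice eliminates both square
roots and leaves an equation linear in `ε₀ E₀²`; its coefficient `(T_k - T_l)² γ²` is nonzero
because `x ↦ tanh x / x` is strictly decreasing on `(0, ∞)`.
-/

open Real Set

/-- The root `λ*_+` of `λ² - γ T λ + e - a T = 0`, where `a = g + σ k²` and `e = ε₀ E₀²`. -/
noncomputable def dispersionRoot (γ T a e : ℝ) : ℝ :=
  γ / 2 * T + √(γ ^ 2 * T ^ 2 / 4 + a * T - e)

theorem four_mul_sq_mul_eq_sq_of_add_sqrt_eq_add_sqrt {p q A B : ℝ} (hA : 0 ≤ A) (hB : 0 ≤ B)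
    (h : p + √A = q + √B) : 4 * (q - p) ^ 2 * B = (A - B - (q - p) ^ 2) ^ 2 := by
  have hB_sq : √B ^ 2 = B := sq_sqrt hB
  have hA_sq : A = (q - p + √B) ^ 2 := by
    rw [← sq_sqrt hA]
    congr 1
    linarith
  have hcross : 2 * (q - p) * √B = A - B - (q - p) ^ 2 := by
    rw [hA_sq]
    linear_combination -hB_sq
  rw [← hcross]
  linear_combination (-4 * (q - p) ^ 2) * hB_sq

theorem sq_mul_eq_of_dispersionRoot_eq {γ Tk Tl ak al e : ℝ}
    (hk : 0 ≤ γ ^ 2 * Tk ^ 2 / 4 + ak * Tk - e) (hl : 0 ≤ γ ^ 2 * Tl ^ 2 / 4 + al * Tl - e)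
    (h : dispersionRoot γ Tk ak e = dispersionRoot γ Tl al e) :
    (Tk - Tl) ^ 2 * γ ^ 2 * e =
      γ ^ 2 * (al - ak) * Tk * Tl * (Tk - Tl) - (ak * Tk - al * Tl) ^ 2 := by
  have := four_mul_sq_mul_eq_sq_of_add_sqrt_eq_add_sqrt hk hl h
  linear_combination -this

theorem tanh_div_self_strictAntiOn : StrictAntiOn (fun x : ℝ => tanh x / x) (Ioi 0) := by
  have hsinh : (fun x : ℝ => tanh x / x) = fun x => sinh x / (cosh x * x) := by
    funext x
    rw [tanh_eq_sinh_div_cosh, div_div]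
  rw [hsinh]
  apply strictAntiOn_of_deriv_neg (convex_Ioi 0)
  · refine continuous_sinh.continuousOn.div (continuous_cosh.continuousOn.mul continuousOn_id) ?_
    intro x hx
    exact mul_ne_zero (cosh_pos x).ne' (ne_of_gt hx)
  · intro x hx
    rw [interior_Ioi] at hx
    have hx0 : 0 < x := hx
    have hd : HasDerivAt (fun y => sinh y / (cosh y * y)) _ x := (hasDerivAt_sinh x).div ((hasDerivAt_cosh x).mul (hasDerivAt_id' x))
      (mul_ne_zero (cosh_pos x).ne' hx0.ne')
    rw [hd.deriv]
    apply div_neg_of_neg_of_pos _ (by positivity)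
    -- the numerator is `x - sinh x cosh x = x - sinh (2x) / 2 < 0`
    have h2x : 2 * x < sinh (2 * x) := self_lt_sinh_iff.mpr (by linarith)
    have hpyth : cosh x ^ 2 - sinh x ^ 2 = 1 := cosh_sq_sub_sinh_sq x
    rw [sinh_two_mul] at h2x
    nlinarith

theorem resonance_determines_E_general (γ g σ ε₀ E₀ : ℝ) (hγ : γ ≠ 0)
    (hε : 0 < ε₀) (k l : ℕ) (hk : 0 < k) (hl : 0 < l) (hkl : k ≠ l)
    (Tk Tl : ℝ) (hTk : Tk = Real.tanh k / k) (hTl : Tl = Real.tanh l / l)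
    (hdk : 0 ≤ γ^2 * Tk^2 / 4 + (g + σ * (k:ℝ)^2) * Tk - ε₀ * E₀^2)
    (hdl : 0 ≤ γ^2 * Tl^2 / 4 + (g + σ * (l:ℝ)^2) * Tl - ε₀ * E₀^2)
    (hres : γ / 2 * Tk + Real.sqrt (γ^2 * Tk^2 / 4 + (g + σ * (k:ℝ)^2) * Tk - ε₀ * E₀^2) =
            γ / 2 * Tl + Real.sqrt (γ^2 * Tl^2 / 4 + (g + σ * (l:ℝ)^2) * Tl - ε₀ * E₀^2)) :
    E₀^2 = (σ * γ^2 * ((l:ℝ)^2 - (k:ℝ)^2) * Tk * Tl * (Tk - Tl)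
              - ((g + σ * (k:ℝ)^2) * Tk - (g + σ * (l:ℝ)^2) * Tl)^2) /
           ((Tk - Tl)^2 * γ^2 * ε₀) := by
  have hTkl : Tk ≠ Tl := by
    rintro h
    have hkl' : (k : ℝ) = l :=
      tanh_div_self_strictAntiOn.injOn
      (mem_Ioi.mpr (Nat.cast_pos.mpr hk)) (mem_Ioi.mpr (Nat.cast_pos.mpr hl)) (hTk ▸ hTl ▸ h)
    exact hkl (by exact_mod_cast hkl')
  have hden : (Tk - Tl) ^ 2 * γ ^ 2 * ε₀ ≠ 0 := by
    have := sub_ne_zero.mpr hTkl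
    positivity
  rw [eq_div_iff hden]
  linear_combination sq_mul_eq_of_dispersionRoot_eq hdk hdl hres

theorem resonance_determines_E (γ g σ ε₀ E₀ : ℝ) (hγ : γ ≠ 0) (hg : 0 < g) (hσ : 0 < σ)
    (hε : 0 < ε₀) (k l : ℕ) (hk : 0 < k) (hl : 0 < l) (hkl : k ≠ l)
    (Tk Tl : ℝ) (hTk : Tk = Real.tanh k / k) (hTl : Tl = Real.tanh l / l)
    (hdk : 0 ≤ γ^2 * Tk^2 / 4 + (g + σ * (k:ℝ)^2) * Tk - ε₀ * E₀^2)
    (hdl : 0 ≤ γ^2 * Tl^2 / 4 + (g + σ * (l:ℝ)^2) * Tl - ε₀ * E₀^2)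
    (hres : γ / 2 * Tk + Real.sqrt (γ^2 * Tk^2 / 4 + (g + σ * (k:ℝ)^2) * Tk - ε₀ * E₀^2) =
            γ / 2 * Tl + Real.sqrt (γ^2 * Tl^2 / 4 + (g + σ * (l:ℝ)^2) * Tl - ε₀ * E₀^2)) :
    E₀^2 = (σ * γ^2 * ((l:ℝ)^2 - (k:ℝ)^2) * Tk * Tl * (Tk - Tl)
              - ((g + σ * (k:ℝ)^2) * Tk - (g + σ * (l:ℝ)^2) * Tl)^2) /
           ((Tk - Tl)^2 * γ^2 * ε₀) :=
  resonance_determines_E_general γ g σ ε₀ E₀ hγ hε k l hk hl hkl Tk Tl hTk hTl hdk hdl hres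
end

section
/- Let γ ≠ 0, g, σ, ε₀ > 0 and T_k = tanh(k)/k. Suppose k, l, m are pairwise distinct positive integers and E₀² = E_{k,l} = E_{k,m}, where E_{k,l} := [σγ²(l² − k²)T_kT_l(T_k − T_l) − ((g + σk²)T_k − (g + σl²)T_l)²]/((T_k − T_l)²γ²ε₀), and suppose the triple resonance λ*_{k,+} = λ*_{l,+} = λ*_{m,+} holds. Then T_l = T_m, which contradicts the strict monotonicity of T; hence no triple resonance λ*_{k,+} = λ*_{l,+} = λ*_{m,+} can occur for distinct k, l, m. Equivalently: the kernel of the linearized operator at a resonant electric field E₀² = E_{k,l} is exactly two-dimensional, spanned by cos(kq) and cos(lq). -/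
/-!
At a common value `μ` of `λ*_{k,+}`, `λ*_{l,+}`, `λ*_{m,+}`, each root equation
`μ² - γ T_n μ = (g + σ n²) T_n - ε₀ E₀²` (legitimate because `E₀² = E_{k,l} = E_{k,m}` makes
the discriminants perfect squares up to a positive factor) becomes, after division by `T_n`,
an identity `n² = α · n coth n + β` with `α, β` independent of `n`: the points
`(n², n coth n)`, `n = k, l, m`, would be collinear. But `n coth n = n + 2n / (e^{2n} - 1)`,
and the correction term is positive, decreasing and, at integers, small enough that the chord
slopes of `n coth n` against `n²` strictly decrease. The same estimate makes
`n ↦ n coth n = 1 / T_n` injective, so `E_{k,l}` and `E_{k,m}` have nonzero denominators.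
-/

open Real Set

noncomputable def cothRemainder (x : ℝ) : ℝ := 2 * x / (exp (2 * x) - 1)

theorem div_tanh_eq_add_cothRemainder (x : ℝ) : x / tanh x = x + cothRemainder x := by
  rcases eq_or_ne x 0 with rfl | hx
  · simp [cothRemainder]
  have he : exp (2 * x) - 1 ≠ 0 := by
    rw [sub_ne_zero, Ne, exp_eq_one_iff]
    simpa using hx
  have htanh : tanh x = (exp (2 * x) - 1) / (exp (2 * x) + 1) := by
    rw [tanh_eq, two_mul, exp_add, exp_neg]
    field_simp
  rw [htanh, cothRemainder, div_div_eq_mul_div, add_div' _ _ _ he]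
  ring

theorem cothRemainder_pos {x : ℝ} (hx : 0 < x) : 0 < cothRemainder x :=
  div_pos (by linarith) (sub_pos.2 (one_lt_exp_iff.2 (by linarith)))

theorem cothRemainder_strictAntiOn : StrictAntiOn cothRemainder (Ioi 0) := by
  intro a ha b hb hab
  have hsec := strictConvexOn_exp.secant_strict_mono (mem_univ 0) (mem_univ (2 * a))
    (mem_univ (2 * b)) (by simpa using ha.ne') (by simpa using (mem_Ioi.1 hb).ne') (by linarith)
  simp only [exp_zero, sub_zero] at hsec
  have ha' : 0 < exp (2 * a) - 1 := sub_pos.2 (one_lt_exp_iff.2 (by simpa using ha))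
  rw [cothRemainder, cothRemainder, ← one_div_div (exp (2 * b) - 1),
    ← one_div_div (exp (2 * a) - 1)]
  exact one_div_lt_one_div_of_lt (div_pos ha' (by simpa using ha)) hsec

theorem cothRemainder_mul_lt {x : ℝ} (hx : 1 ≤ x) : cothRemainder x * (2 * x + 3) < 2 := by
  have hexp : exp (2 * x) = exp x ^ 2 := by rw [← exp_nat_mul]; norm_num
  have hq := quadratic_le_exp_of_nonneg (by linarith : 0 ≤ x)
  have hsq : (1 + x + x ^ 2 / 2) ^ 2 ≤ exp x ^ 2 := pow_le_pow_left₀ (by positivity) hq 2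
  have hpos : 0 < exp (2 * x) - 1 := sub_pos.2 (one_lt_exp_iff.2 (by linarith))
  rw [cothRemainder, div_mul_eq_mul_div, div_lt_iff₀ hpos]
  nlinarith [mul_nonneg (by linarith : (0 : ℝ) ≤ x - 1)
    (by positivity : (0 : ℝ) ≤ x ^ 2 + 5 * x)]

theorem cothRemainder_mul_add_lt {a b c : ℝ} (ha : 1 ≤ a) (hab : a + 1 ≤ b)
    (hbc : b + 1 ≤ c) :
    cothRemainder a * (b + c) < (b - a) * (c - a) := by
  have h := cothRemainder_mul_lt ha
  have hpos := cothRemainder_pos (by linarith : 0 < a)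
  nlinarith [mul_nonneg hpos.le (by linarith : 0 ≤ 2 * (b - a) + (c - b) - 3),
    mul_nonneg (by linarith : 0 ≤ b - a - 1) (by linarith : 0 ≤ c - a - 1)]

theorem div_tanh_pos {x : ℝ} (hx : 0 < x) : 0 < x / tanh x := by
  rw [div_tanh_eq_add_cothRemainder]
  linarith [cothRemainder_pos hx]

theorem div_tanh_lt_div_tanh {a b : ℝ} (ha : 1 ≤ a) (hab : a + 1 ≤ b) :
    a / tanh a < b / tanh b := by
  rw [div_tanh_eq_add_cothRemainder, div_tanh_eq_add_cothRemainder]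
  nlinarith [cothRemainder_mul_lt ha, cothRemainder_pos (by linarith : 0 < a),
    cothRemainder_pos (by linarith : 0 < b)]

theorem strictMonoOn_natCast_div_tanh :
    StrictMonoOn (fun n : ℕ => (n : ℝ) / tanh n) {n | 0 < n} := by
  intro a ha b _ hab
  exact div_tanh_lt_div_tanh (by exact_mod_cast ha) (by exact_mod_cast hab)

theorem sq_sub_sq_mul_div_tanh_sub_lt {a b c : ℝ} (ha : 1 ≤ a) (hab : a + 1 ≤ b)
    (hbc : b + 1 ≤ c) :
    (b ^ 2 - a ^ 2) * (c / tanh c - b / tanh b) < (c ^ 2 - b ^ 2) * (b / tanh b - a / tanh a) := by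
  simp only [div_tanh_eq_add_cothRemainder]
  have hδa := cothRemainder_mul_add_lt ha hab hbc
  have hδb := cothRemainder_pos (by linarith : 0 < b)
  have hδcb : cothRemainder c < cothRemainder b :=
    cothRemainder_strictAntiOn (mem_Ioi.2 (by linarith)) (mem_Ioi.2 (by linarith)) (by linarith)
  nlinarith [mul_lt_mul_of_pos_left hδcb (by nlinarith : 0 < b ^ 2 - a ^ 2),
    mul_lt_mul_of_pos_left hδa (by linarith : 0 < c - b),
    mul_pos hδb (by nlinarith : 0 < c ^ 2 - b ^ 2)]

theorem not_sq_eq_affine_div_tanh_of_lt {a b c : ℕ} (ha : 0 < a) (hab : a < b) (hbc : b < c)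
    (α β : ℝ) (h_a : (a : ℝ) ^ 2 = α * (a / tanh a) + β)
    (h_b : (b : ℝ) ^ 2 = α * (b / tanh b) + β)
    (h_c : (c : ℝ) ^ 2 = α * (c / tanh c) + β) : False := by
  have hlt := sq_sub_sq_mul_div_tanh_sub_lt (a := a) (b := b) (c := c) (by exact_mod_cast ha)
    (by exact_mod_cast hab) (by exact_mod_cast hbc)
  refine hlt.ne ?_
  rw [h_a, h_b, h_c]
  ring

theorem not_sq_eq_affine_div_tanh {k l m : ℕ} (hk : 0 < k) (hl : 0 < l) (hm : 0 < m)
    (hkl : k ≠ l) (hkm : k ≠ m) (hlm : l ≠ m)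
    (α β : ℝ) (h_k : (k : ℝ) ^ 2 = α * (k / tanh k) + β)
    (h_l : (l : ℝ) ^ 2 = α * (l / tanh l) + β)
    (h_m : (m : ℝ) ^ 2 = α * (m / tanh m) + β) : False := by
  rcases hkl.lt_or_gt with hkl | hkl <;> rcases hkm.lt_or_gt with hkm | hkm <;>
    rcases hlm.lt_or_gt with hlm | hlm
  · exact not_sq_eq_affine_div_tanh_of_lt hk hkl hlm α β h_k h_l h_m
  · exact not_sq_eq_affine_div_tanh_of_lt hk hkm hlm α β h_k h_m h_l
  · omega
  · exact not_sq_eq_affine_div_tanh_of_lt hm hkm hkl α β h_m h_k h_l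
  · exact not_sq_eq_affine_div_tanh_of_lt hl hkl hkm α β h_l h_k h_m
  · omega
  · exact not_sq_eq_affine_div_tanh_of_lt hl hlm hkm α β h_l h_m h_k
  · exact not_sq_eq_affine_div_tanh_of_lt hm hlm hkl α β h_m h_l h_k

theorem discriminant_nonneg_of_eq {γ c x y P Q : ℝ} (hγ : γ ≠ 0) (hxy : x ≠ y)
    (h : c * (γ ^ 2 * (x - y) ^ 2) = γ ^ 2 * (Q - P) * x * y * (x - y) - (P * x - Q * y) ^ 2) :
    0 ≤ γ ^ 2 * x ^ 2 / 4 + P * x - c := by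
  have hsq : (γ ^ 2 * x ^ 2 / 4 + P * x - c) * (4 * γ ^ 2 * (x - y) ^ 2)
      = (γ ^ 2 * x * (x - y) + 2 * (P * x - Q * y)) ^ 2 := by
    linear_combination (-4) * h
  have hpos : 0 < 4 * γ ^ 2 * (x - y) ^ 2 := by
    have := sub_ne_zero.2 hxy
    positivity
  exact nonneg_of_mul_nonneg_left (hsq ▸ sq_nonneg _) hpos

theorem sq_eq_affine_inv_of_eq_add_sqrt {γ g σ c t μ n : ℝ} (hσ : σ ≠ 0) (ht : t ≠ 0)
    (hD : 0 ≤ γ ^ 2 * t ^ 2 / 4 + (g + σ * n ^ 2) * t - c)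
    (hμ : μ = γ / 2 * t + √(γ ^ 2 * t ^ 2 / 4 + (g + σ * n ^ 2) * t - c)) :
    n ^ 2 = (μ ^ 2 + c) / σ * t⁻¹ + -((γ * μ + g) / σ) := by
  have hroot : (μ - γ / 2 * t) ^ 2 = γ ^ 2 * t ^ 2 / 4 + (g + σ * n ^ 2) * t - c := by
    rw [hμ, add_sub_cancel_left, sq_sqrt hD]
  field_simp
  linear_combination (-1) * hroot

theorem no_triple_resonance_general (γ g σ ε₀ E₀ : ℝ) (hγ : γ ≠ 0) (hσ : 0 < σ)
    (hε : 0 < ε₀) (k l m : ℕ) (hk : 0 < k) (hl : 0 < l) (hm : 0 < m)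
    (hkl : k ≠ l) (hkm : k ≠ m) (hlm : l ≠ m)
    (T : ℕ → ℝ) (hT : ∀ n : ℕ, T n = Real.tanh n / n)
    (E : ℕ → ℕ → ℝ)
    (hE : ∀ i j : ℕ, E i j =
      (σ * γ^2 * ((j:ℝ)^2 - (i:ℝ)^2) * T i * T j * (T i - T j)
          - ((g + σ * (i:ℝ)^2) * T i - (g + σ * (j:ℝ)^2) * T j)^2) /
        ((T i - T j)^2 * γ^2 * ε₀))
    (hEkl : E₀^2 = E k l) (hEkm : E₀^2 = E k m)
    (lam : ℕ → ℝ)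
    (hlam : ∀ n : ℕ, lam n = γ / 2 * T n +
      Real.sqrt (γ^2 * (T n)^2 / 4 + (g + σ * (n:ℝ)^2) * T n - ε₀ * E₀^2))
    (hres : lam k = lam l ∧ lam l = lam m) :
    T l = T m ∧ False := by
  have hT_inv (n : ℕ) : (T n)⁻¹ = n / tanh n := by rw [hT, inv_div]
  have hT_ne_zero {n : ℕ} (hn : 0 < n) : T n ≠ 0 := fun h =>
    (div_tanh_pos (Nat.cast_pos.2 hn)).ne' (by rw [← hT_inv, h, inv_zero])
  have hT_ne {i j : ℕ} (hi : 0 < i) (hj : 0 < j) (hij : i ≠ j) : T i ≠ T j := fun h =>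
    hij (strictMonoOn_natCast_div_tanh.injOn hi hj (by simp only [← hT_inv, h]))
  have hdisc {j : ℕ} (hj : 0 < j) (hkj : k ≠ j) (hEkj : E₀ ^ 2 = E k j) :
      0 ≤ γ ^ 2 * (T k) ^ 2 / 4 + (g + σ * (k : ℝ) ^ 2) * T k - ε₀ * E₀ ^ 2 ∧
      0 ≤ γ ^ 2 * (T j) ^ 2 / 4 + (g + σ * (j : ℝ) ^ 2) * T j - ε₀ * E₀ ^ 2 := by
    have hTkj := hT_ne hk hj hkj
    rw [hE, eq_div_iff (mul_ne_zero (mul_ne_zero (pow_ne_zero 2 (sub_ne_zero.2 hTkj))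
      (pow_ne_zero 2 hγ)) hε.ne')] at hEkj
    exact ⟨discriminant_nonneg_of_eq (Q := g + σ * (j : ℝ) ^ 2) hγ hTkj
        (by linear_combination hEkj),
      discriminant_nonneg_of_eq (Q := g + σ * (k : ℝ) ^ 2) hγ hTkj.symm
        (by linear_combination hEkj)⟩
  obtain ⟨hDk, hDl⟩ := hdisc hl hkl hEkl
  obtain ⟨-, hDm⟩ := hdisc hm hkm hEkm
  have haff {n : ℕ} (hn : 0 < n)
      (hD : 0 ≤ γ ^ 2 * (T n) ^ 2 / 4 + (g + σ * (n : ℝ) ^ 2) * T n - ε₀ * E₀ ^ 2)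
      (hμ : lam n = lam k) :
      (n : ℝ) ^ 2 =
        (lam k ^ 2 + ε₀ * E₀ ^ 2) / σ * (n / tanh n) + -((γ * lam k + g) / σ) := by
    rw [← hT_inv]
    exact sq_eq_affine_inv_of_eq_add_sqrt hσ.ne' (hT_ne_zero hn) hD (hμ.symm.trans (hlam n))
  exact (not_sq_eq_affine_div_tanh hk hl hm hkl hkm hlm _ _ (haff hk hDk rfl)
    (haff hl hDl hres.1.symm) (haff hm hDm (hres.1.trans hres.2).symm)).elim

theorem no_triple_resonance (γ g σ ε₀ E₀ : ℝ) (hγ : γ ≠ 0) (hg : 0 < g) (hσ : 0 < σ)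
    (hε : 0 < ε₀) (k l m : ℕ) (hk : 0 < k) (hl : 0 < l) (hm : 0 < m)
    (hkl : k ≠ l) (hkm : k ≠ m) (hlm : l ≠ m)
    (T : ℕ → ℝ) (hT : ∀ n : ℕ, T n = Real.tanh n / n)
    (E : ℕ → ℕ → ℝ)
    (hE : ∀ i j : ℕ, E i j =
      (σ * γ^2 * ((j:ℝ)^2 - (i:ℝ)^2) * T i * T j * (T i - T j)
          - ((g + σ * (i:ℝ)^2) * T i - (g + σ * (j:ℝ)^2) * T j)^2) /
        ((T i - T j)^2 * γ^2 * ε₀))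
    (hEkl : E₀^2 = E k l) (hEkm : E₀^2 = E k m)
    (lam : ℕ → ℝ)
    (hlam : ∀ n : ℕ, lam n = γ / 2 * T n +
      Real.sqrt (γ^2 * (T n)^2 / 4 + (g + σ * (n:ℝ)^2) * T n - ε₀ * E₀^2))
    (hres : lam k = lam l ∧ lam l = lam m) :
    T l = T m ∧ False :=
  no_triple_resonance_general γ g σ ε₀ E₀ hγ hσ hε k l m hk hl hm hkl hkm hlm T hT E hE hEkl hEkm
    lam hlam hres
end

section
/- Let T_k = tanh(k)/k, γ ≠ 0, ε₀ > 0, E₀* > 0, and k ≠ l positive integers. Then the 2×2 determinant | a₁ b₁ ; a₂ b₂ | with a₁ = −(2k/tanh k)(2λ* − γtanh(k)/k), b₁ = −(4k/tanh k)ε₀E₀*, a₂ = −(2l/tanh l)(2λ* − γtanh(l)/l), b₂ = −(4l/tanh l)ε₀E₀*, where λ* is a common root of both dispersion quadratics (λ*² − γT_jλ* + ε₀E₀*² − (g+σj²)T_j = 0 for j = k and j = l), equals 8γε₀E₀*(T_l − T_k)/(T_kT_l), which is nonzero. -/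
/-!
Writing `T_j = tanh j / j`, the entries are `a_j = -(2 / T_j)(2λ* - γ T_j)` and
`b_j = -(4 / T_j) ε₀ E₀*`, so in `a₁ b₂ - a₂ b₁` the terms in `λ*` cancel and what remains is
`8 γ ε₀ E₀* (T_l - T_k) / (T_k T_l)`. This is nonzero
because `x ↦ tanh x / x` is strictly decreasing on `(0, ∞)`, its derivative having the sign of
`x - sinh x cosh x < 0`.
-/

open Real Set

namespace Real

theorem hasDerivAt_tanh (x : ℝ) : HasDerivAt tanh (1 / cosh x ^ 2) x := by
  have htanh : tanh = sinh / cosh := funext tanh_eq_sinh_div_cosh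
  have hquot := (hasDerivAt_sinh x).div (hasDerivAt_cosh x) (cosh_pos x).ne'
  rwa [← htanh, ← sq, ← sq, cosh_sq_sub_sinh_sq] at hquot

theorem continuous_tanh : Continuous tanh :=
  continuous_iff_continuousAt.mpr fun x => (hasDerivAt_tanh x).continuousAt

theorem tanh_pos {x : ℝ} (hx : 0 < x) : 0 < tanh x := by
  rw [tanh_eq_sinh_div_cosh]
  exact div_pos (sinh_pos_iff.mpr hx) (cosh_pos x)

theorem self_lt_sinh_mul_cosh {x : ℝ} (hx : 0 < x) : x < sinh x * cosh x :=
  (self_lt_sinh_iff.mpr hx).trans_le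
    (le_mul_of_one_le_right (sinh_pos_iff.mpr hx).le (one_le_cosh x))

theorem strictAntiOn_tanh_div_self : StrictAntiOn (fun x => tanh x / x) (Ioi 0) := by
  apply strictAntiOn_of_deriv_neg (convex_Ioi 0)
    (continuous_tanh.continuousOn.div continuousOn_id fun x hx => ne_of_gt hx)
  intro x hx
  rw [interior_Ioi, mem_Ioi] at hx
  rw [((hasDerivAt_tanh x).div (hasDerivAt_id x) hx.ne').deriv]
  refine div_neg_of_neg_of_pos ?_ (by positivity)
  have hcosh := cosh_pos x
  have hlt := self_lt_sinh_mul_cosh hx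
  rw [tanh_eq_sinh_div_cosh, id, sub_neg, div_mul_eq_mul_div, one_mul, mul_one,
    div_lt_div_iff₀ (by positivity) hcosh]
  nlinarith

end Real

theorem nondegeneracy_determinant_general (γ ε₀ E₀ lam : ℝ) (hγ : γ ≠ 0) (hε : 0 < ε₀)
    (hE : 0 < E₀) (k l : ℕ) (hk : 0 < k) (hl : 0 < l) (hkl : k ≠ l)
    (Tk Tl : ℝ) (hTk : Tk = Real.tanh k / k) (hTl : Tl = Real.tanh l / l) :
    (-(2 * k / Real.tanh k) * (2 * lam - γ * Real.tanh k / k)) *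
        (-(4 * l / Real.tanh l) * ε₀ * E₀) -
      (-(2 * l / Real.tanh l) * (2 * lam - γ * Real.tanh l / l)) *
        (-(4 * k / Real.tanh k) * ε₀ * E₀) =
      8 * γ * ε₀ * E₀ * (Tl - Tk) / (Tk * Tl) ∧
    8 * γ * ε₀ * E₀ * (Tl - Tk) / (Tk * Tl) ≠ 0 := by
  have hk0 : (0 : ℝ) < k := by exact_mod_cast hk
  have hl0 : (0 : ℝ) < l := by exact_mod_cast hl
  have htk := tanh_pos hk0
  have htl := tanh_pos hl0
  have hTk0 : 0 < Tk := hTk ▸ div_pos htk hk0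
  have hTl0 : 0 < Tl := hTl ▸ div_pos htl hl0
  have hT : Tl - Tk ≠ 0 := by
    rw [hTk, hTl, sub_ne_zero]
    exact strictAntiOn_tanh_div_self.injOn.ne hl0 hk0 (by exact_mod_cast hkl.symm)
  refine ⟨?_, by positivity⟩
  subst hTk hTl
  field_simp
  ring

theorem nondegeneracy_determinant (γ g σ ε₀ E₀ lam : ℝ) (hγ : γ ≠ 0) (hε : 0 < ε₀)
    (hE : 0 < E₀) (k l : ℕ) (hk : 0 < k) (hl : 0 < l) (hkl : k ≠ l)
    (Tk Tl : ℝ) (hTk : Tk = Real.tanh k / k) (hTl : Tl = Real.tanh l / l)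
    (hrootk : lam^2 - γ * Tk * lam + ε₀ * E₀^2 - (g + σ * (k:ℝ)^2) * Tk = 0)
    (hrootl : lam^2 - γ * Tl * lam + ε₀ * E₀^2 - (g + σ * (l:ℝ)^2) * Tl = 0) :
    (-(2 * k / Real.tanh k) * (2 * lam - γ * Real.tanh k / k)) *
        (-(4 * l / Real.tanh l) * ε₀ * E₀) -
      (-(2 * l / Real.tanh l) * (2 * lam - γ * Real.tanh l / l)) *
        (-(4 * k / Real.tanh k) * ε₀ * E₀) =
      8 * γ * ε₀ * E₀ * (Tl - Tk) / (Tk * Tl) ∧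
    8 * γ * ε₀ * E₀ * (Tl - Tk) / (Tk * Tl) ≠ 0 :=
  nondegeneracy_determinant_general γ ε₀ E₀ lam hγ hε hE k l hk hl hkl Tk Tl hTk hTl
end

section
/- Let k be a positive integer, T_k = tanh(k)/k, σ > 0, g > 0, ε₀ > 0, E₀* ≥ 0, and let λ* := λ*_{k,+} = √((g+σk²)T_k − ε₀E₀*²) (the positive root in the irrotational case γ = 0), assuming (g+σk²)T_k > ε₀E₀*². Then the quantity M₃ := −3k²(λ*² + ε₀E₀*²) − 18(λ*² + ε₀E₀*²) − (9/2)k⁴σ + 3k²λ*·λ*(T_k−1)/T_k + 27λ*·λ*(T_k−1)/T_k − 3k²ε₀E₀*²(1−T_k)/T_k − 27ε₀E₀*²(1−T_k)/T_k − 3(λ*(T_k−1)/T_k)² − 3ε₀((1−T_k)/T_k)²E₀*² is strictly negative. -/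
/-! With `u = (1 - T_k)/T_k ≥ 0` and `S = λ*² + ε₀E₀*² ≥ 0`, the cubic term regroups as
`-(3k² + 18 + (3k² + 27) u + 3u²) S - (9/2) k⁴ σ`, a nonpositive term minus a positive one. -/

open Real

lemma Real.tanh_pos_s16 {x : ℝ} (hx : 0 < x) : 0 < tanh x := by
  rw [tanh_eq_sinh_div_cosh]
  exact div_pos (sinh_pos_iff.mpr hx) (cosh_pos x)

lemma Real.tanh_div_self_pos {x : ℝ} (hx : 0 < x) : 0 < tanh x / x :=
  div_pos (tanh_pos_s16 hx) hx

lemma Real.tanh_div_self_lt_one {x : ℝ} (hx : 1 ≤ x) : tanh x / x < 1 :=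
  (div_lt_one (by linarith)).mpr ((tanh_lt_one x).trans_le hx)

lemma cubic_term_eq (k σ ε₀ E₀ T lam : ℝ) :
    -3 * k^2 * (lam^2 + ε₀ * E₀^2) - 18 * (lam^2 + ε₀ * E₀^2) - 9/2 * k^4 * σ
      + 3 * k^2 * lam * (lam * (T - 1) / T) + 27 * lam * (lam * (T - 1) / T)
      - 3 * k^2 * ε₀ * E₀^2 * ((1 - T) / T) - 27 * ε₀ * E₀^2 * ((1 - T) / T)
      - 3 * (lam * (T - 1) / T)^2 - 3 * ε₀ * ((1 - T) / T)^2 * E₀^2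
      = -((3 * k^2 + 18 + (3 * k^2 + 27) * ((1 - T) / T) + 3 * ((1 - T) / T)^2)
          * (lam^2 + ε₀ * E₀^2)) - 9/2 * k^4 * σ := by
  ring

theorem cubic_term_negative_general (k : ℕ) (hk : 0 < k) (σ ε₀ E₀ : ℝ)
    (hσ : 0 < σ) (hε : 0 < ε₀)
    (Tk : ℝ) (hTk : Tk = Real.tanh k / k)
    (lam : ℝ) :
    -3 * (k:ℝ)^2 * (lam^2 + ε₀ * E₀^2) - 18 * (lam^2 + ε₀ * E₀^2) - 9/2 * (k:ℝ)^4 * σ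
      + 3 * (k:ℝ)^2 * lam * (lam * (Tk - 1) / Tk) + 27 * lam * (lam * (Tk - 1) / Tk)
      - 3 * (k:ℝ)^2 * ε₀ * E₀^2 * ((1 - Tk) / Tk) - 27 * ε₀ * E₀^2 * ((1 - Tk) / Tk)
      - 3 * (lam * (Tk - 1) / Tk)^2 - 3 * ε₀ * ((1 - Tk) / Tk)^2 * E₀^2 < 0 := by
  have hk1 : (1 : ℝ) ≤ k := by exact_mod_cast hk
  have hT0 : 0 < Tk := hTk ▸ tanh_div_self_pos (by linarith)
  have hT1 : Tk < 1 := hTk ▸ tanh_div_self_lt_one hk1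
  have hu : 0 ≤ (1 - Tk) / Tk := div_nonneg (by linarith) hT0.le
  have hS : 0 ≤ lam^2 + ε₀ * E₀^2 := by positivity
  have hcoeff : 0 ≤ 3 * (k:ℝ)^2 + 18 + (3 * (k:ℝ)^2 + 27) * ((1 - Tk) / Tk)
      + 3 * ((1 - Tk) / Tk)^2 := by positivity
  have hσk : 0 < (k:ℝ)^4 * σ := by positivity
  rw [cubic_term_eq]
  linarith [mul_nonneg hcoeff hS]

theorem cubic_term_negative (k : ℕ) (hk : 0 < k) (σ g ε₀ E₀ : ℝ)
    (hσ : 0 < σ) (hg : 0 < g) (hε : 0 < ε₀) (hE : 0 ≤ E₀)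
    (Tk : ℝ) (hTk : Tk = Real.tanh k / k)
    (hdisc : (g + σ * (k:ℝ)^2) * Tk > ε₀ * E₀^2)
    (lam : ℝ) (hlam : lam = Real.sqrt ((g + σ * (k:ℝ)^2) * Tk - ε₀ * E₀^2)) :
    -3 * (k:ℝ)^2 * (lam^2 + ε₀ * E₀^2) - 18 * (lam^2 + ε₀ * E₀^2) - 9/2 * (k:ℝ)^4 * σ
      + 3 * (k:ℝ)^2 * lam * (lam * (Tk - 1) / Tk) + 27 * lam * (lam * (Tk - 1) / Tk)
      - 3 * (k:ℝ)^2 * ε₀ * E₀^2 * ((1 - Tk) / Tk) - 27 * ε₀ * E₀^2 * ((1 - Tk) / Tk)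
      - 3 * (lam * (Tk - 1) / Tk)^2 - 3 * ε₀ * ((1 - Tk) / Tk)^2 * E₀^2 < 0 :=
  cubic_term_negative_general k hk σ ε₀ E₀ hσ hε Tk hTk lam
end
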